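/- arXiv:1611.08726 — 2 statements merged into one kernel-verified Lean document; each statement's English description precedes it below -/
import Mathlib

section
/- Let B₁ ≤ B₂ and suppose g is monotone (nondecreasing in its first argument and nonincreasing in its second) and continuously differentiable on [B₁,B₂]×[B₁,B₂], and that the CFL condition (Δt/Δx)(sup_{[B₁,B₂]²}|∂₁g| + sup_{[B₁,B₂]²}|∂₂g|) ≤ 1 holds. Then the scheme map H(u_{j−r},…,u_j,…,u_{j+r}) = u_j − Δt Σ_{k=1}^{r∨1} W_k (g(u_j, u_{j+k}) − g(u_{j−k}, u_j)) is monotone on [B₁,B₂]^{2r+1}: if v_i ≤ w_i for every index i, with all v_i, w_i ∈ [B₁,B₂], then H(v) ≤ H(w). -/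
open MeasureTheory Real Set Filter Topology

noncomputable section

/-- The nonlocal entropy flux `q(a,b;c) = g(a ⊔ c, b ⊔ c) - g(a ⊓ c, b ⊓ c)`. -/
def entFlux (g : ℝ → ℝ → ℝ) (a b c : ℝ) : ℝ :=
  g (max a c) (max b c) - g (min a c) (min b c)

/-- An admissible nonlocal interaction kernel with horizon `δ`. -/
structure AdmissibleKernel (δ : ℝ) (ω : ℝ → ℝ) : Prop where
  nonneg : ∀ h, 0 ≤ ω h
  integrable : Integrable ω
  supp : ∀ h, h ∉ Set.Icc 0 δ → ω h = 0
  normalized : (∫ h in (0:ℝ)..δ, ω h) = 1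

/-- `r = ⌊δ / Δx⌋`. -/
def gridR (δ Δx : ℝ) : ℕ := ⌊δ / Δx⌋₊

/-- `r ∨ 1 = max r 1`. -/
def gridR1 (δ Δx : ℝ) : ℕ := max (gridR δ Δx) 1

/-- The quadrature weights `W_k`. -/
def qWeight (ω : ℝ → ℝ) (δ Δx : ℝ) (k : ℕ) : ℝ :=
  (1 / ((k : ℝ) * Δx)) * (∫ h in (((k : ℝ) - 1) * Δx)..((k : ℝ) * Δx), ω h)
    + (if k = gridR δ Δx then 1 else 0) / ((gridR1 δ Δx : ℝ) * Δx)
        * (∫ h in ((gridR δ Δx : ℝ) * Δx)..δ, ω h)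

/-- One step of the nonlocal scheme `H`. -/
def schemeStep (g : ℝ → ℝ → ℝ) (Δt : ℝ) (W : ℕ → ℝ) (R : ℕ) (v : ℤ → ℝ) (j : ℤ) : ℝ :=
  v j - Δt * ∑ k ∈ Finset.Icc 1 R,
    W k * (g (v j) (v (j + (k : ℤ))) - g (v (j - (k : ℤ))) (v j))

/-- Iterates of the nonlocal scheme. -/
def schemeSol (g : ℝ → ℝ → ℝ) (Δt : ℝ) (W : ℕ → ℝ) (R : ℕ) (v0 : ℤ → ℝ) : ℕ → ℤ → ℝ
  | 0 => v0
  | n + 1 => schemeStep g Δt W R (schemeSol g Δt W R v0 n)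

/-- Cell averages of the initial data. -/
def cellAvg (u₀ : ℝ → ℝ) (Δx : ℝ) (j : ℤ) : ℝ :=
  (1 / Δx) * ∫ x in (((j : ℝ) - 1/2) * Δx)..(((j : ℝ) + 1/2) * Δx), u₀ x

/-- The numerical solution of the nonlocal scheme with initial data `u₀`. -/
def numSol (g : ℝ → ℝ → ℝ) (ω : ℝ → ℝ) (δ Δx Δt : ℝ) (u₀ : ℝ → ℝ) : ℕ → ℤ → ℝ :=
  schemeSol g Δt (qWeight ω δ Δx) (gridR1 δ Δx) (cellAvg u₀ Δx)

/-- Piecewise constant interpolant of a grid function. -/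
def pcInterp (Δx Δt : ℝ) (v : ℕ → ℤ → ℝ) (x t : ℝ) : ℝ :=
  v ⌊t / Δt⌋₊ ⌊x / Δx + 1/2⌋

/-- The piecewise-constant numerical solution `u^{Δ,δ}`. -/
def numInterp (g : ℝ → ℝ → ℝ) (ω : ℝ → ℝ) (δ Δx Δt : ℝ) (u₀ : ℝ → ℝ) (x t : ℝ) : ℝ :=
  pcInterp Δx Δt (numSol g ω δ Δx Δt u₀) x t

/-- `h^Δ(h) = kΔx` for `h ∈ [(k-1)Δx, kΔx)`. -/
def hDelta (Δx h : ℝ) : ℝ := ((⌊h / Δx⌋ : ℝ) + 1) * Δx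

/-- Interpolant of the test function: affine in `x` on each grid cell, piecewise
constant in `t`. -/
def phiDelta (φ : ℝ → ℝ → ℝ) (Δx Δt : ℝ) (x t : ℝ) : ℝ :=
  φ (((⌊x / Δx + 1/2⌋ : ℝ) - 1/2) * Δx) ((⌊t / Δt⌋₊ : ℝ) * Δt)
    + ((x - ((⌊x / Δx + 1/2⌋ : ℝ) - 1/2) * Δx) / Δx)
      * (φ (((⌊x / Δx + 1/2⌋ : ℝ) + 1/2) * Δx) ((⌊t / Δt⌋₊ : ℝ) * Δt)
          - φ (((⌊x / Δx + 1/2⌋ : ℝ) - 1/2) * Δx) ((⌊t / Δt⌋₊ : ℝ) * Δt))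

/-- The `2r`-point numerical flux `𝕘`. -/
def bigFlux (g : ℝ → ℝ → ℝ) (W : ℕ → ℝ) (Δx : ℝ) (R : ℕ) (v : ℤ → ℝ) (j : ℤ) : ℝ :=
  ∑ k ∈ Finset.Icc 1 R, ∑ l ∈ Finset.Icc 1 k,
    g (v (j - (l : ℤ))) (v (j - (l : ℤ) + (k : ℤ))) * W k * Δx

/-- Supremum of `|∂₁ g|` over `[B₁,B₂] × [B₁,B₂]`. -/
def supAbsDeriv1 (g : ℝ → ℝ → ℝ) (B₁ B₂ : ℝ) : ℝ :=
  sSup ((fun p : ℝ × ℝ => |derivWithin (fun a => g a p.2) (Set.Icc B₁ B₂) p.1|) ''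
    (Set.Icc B₁ B₂ ×ˢ Set.Icc B₁ B₂))

/-- Supremum of `|∂₂ g|` over `[B₁,B₂] × [B₁,B₂]`. -/
def supAbsDeriv2 (g : ℝ → ℝ → ℝ) (B₁ B₂ : ℝ) : ℝ :=
  sSup ((fun p : ℝ × ℝ => |derivWithin (fun b => g p.1 b) (Set.Icc B₁ B₂) p.2|) ''
    (Set.Icc B₁ B₂ ×ˢ Set.Icc B₁ B₂))

/-- Entropy solution of the nonlocal conservation law on `ℝ × [0,T]`. -/
structure IsEntropySolNonlocal (T δ : ℝ) (ω : ℝ → ℝ) (g : ℝ → ℝ → ℝ)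
    (u₀ : ℝ → ℝ) (u : ℝ → ℝ → ℝ) : Prop where
  bounded : ∃ M, ∀ x t, |u x t| ≤ M
  integrable : ∀ t ∈ Set.Icc (0:ℝ) T, Integrable (fun x => u x t)
  contL1 : ∀ t₀ ∈ Set.Icc (0:ℝ) T,
    Tendsto (fun t => ∫ x : ℝ, |u x t - u x t₀|) (nhdsWithin t₀ (Set.Icc 0 T)) (nhds 0)
  init : ∀ x, u x 0 = u₀ x
  entropy : ∀ φ : ℝ → ℝ → ℝ, ContDiff ℝ 1 (fun p : ℝ × ℝ => φ p.1 p.2) →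
    HasCompactSupport (fun p : ℝ × ℝ => φ p.1 p.2) → (∀ x t, 0 ≤ φ x t) → ∀ c : ℝ,
    0 ≤ (∫ t in (0:ℝ)..T, ∫ x : ℝ, |u x t - c| * deriv (fun s => φ x s) t)
      + ∫ t in (0:ℝ)..T, ∫ x : ℝ, ∫ h in (0:ℝ)..δ,
          ((φ (x + h) t - φ x t) / h) * entFlux g (u x t) (u (x + h) t) c * ω h

/-- Kruzhkov entropy solution of the local conservation law `u_t + f(u)_x = 0`. -/
structure IsEntropySolLocal (T : ℝ) (f : ℝ → ℝ) (u₀ : ℝ → ℝ) (u : ℝ → ℝ → ℝ) : Prop where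
  bounded : ∃ M, ∀ x t, |u x t| ≤ M
  integrable : ∀ t ∈ Set.Icc (0:ℝ) T, Integrable (fun x => u x t)
  contL1 : ∀ t₀ ∈ Set.Icc (0:ℝ) T,
    Tendsto (fun t => ∫ x : ℝ, |u x t - u x t₀|) (nhdsWithin t₀ (Set.Icc 0 T)) (nhds 0)
  init : ∀ x, u x 0 = u₀ x
  entropy : ∀ φ : ℝ → ℝ → ℝ, ContDiff ℝ 1 (fun p : ℝ × ℝ => φ p.1 p.2) →
    HasCompactSupport (fun p : ℝ × ℝ => φ p.1 p.2) → (∀ x t, 0 ≤ φ x t) → ∀ c : ℝ,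
    0 ≤ ∫ t in (0:ℝ)..T, ∫ x : ℝ,
        (|u x t - c| * deriv (fun s => φ x s) t
          + Real.sign (u x t - c) * (f (u x t) - f c) * deriv (fun y => φ y t) x)



/-!
Only `u_j` enters `H` with both signs. Raising the neighbours `u_{j±k}` can only raise `H`,
since `g` is nonincreasing in its second and nondecreasing in its first argument. Raising `u_j`
by `d` changes each flux balance `g(u_j, u_{j+k}) - g(u_{j-k}, u_j)` by at most `(L₁ + L₂) d`,
where `L₁, L₂` are the suprema of `|∂₁g|, |∂₂g|` (mean value theorem). So `H` changes by at least
`d (1 - Δt (L₁ + L₂) ∑ W_k)`, and this is `≥ 0` by the CFL condition and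
`∑ W_k ≤ ∑ k W_k = 1 / Δx`.
-/

section Weights

variable {ω : ℝ → ℝ} {δ Δx : ℝ}

lemma gridR_mul_le (hΔx : 0 < Δx) (hr : 0 < gridR δ Δx) : (gridR δ Δx : ℝ) * Δx ≤ δ := by
  have hδ : 1 ≤ δ / Δx := Nat.floor_pos.1 hr
  have hr_le : (gridR δ Δx : ℝ) ≤ δ / Δx := Nat.floor_le (by linarith)
  rwa [le_div_iff₀ hΔx] at hr_le

lemma qWeight_nonneg (hΔx : 0 < Δx) (hω : AdmissibleKernel δ ω) {k : ℕ} (hk : 1 ≤ k) :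
    0 ≤ qWeight ω δ Δx k := by
  have hk' : (1 : ℝ) ≤ k := by exact_mod_cast hk
  unfold qWeight
  refine add_nonneg (mul_nonneg (by positivity) ?_) ?_
  · exact intervalIntegral.integral_nonneg (by nlinarith) fun h _ => hω.nonneg h
  · split_ifs with hkr
    · subst hkr
      exact mul_nonneg (by positivity) <|
        intervalIntegral.integral_nonneg (gridR_mul_le hΔx hk) fun h _ => hω.nonneg h
    · simp

lemma sum_Icc_integral_cells {f : ℝ → ℝ} (hf : ∀ a b, IntervalIntegrable f volume a b)
    (Δx : ℝ) (n : ℕ) :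
    ∑ k ∈ Finset.Icc 1 n, ∫ h in ((k : ℝ) - 1) * Δx..(k : ℝ) * Δx, f h
      = ∫ h in (0 : ℝ)..n * Δx, f h := by
  induction n with
  | zero => simp
  | succ n ih =>
    rw [Finset.sum_Icc_succ_top (by omega), ih, Nat.cast_succ, add_sub_cancel_right,
      intervalIntegral.integral_add_adjacent_intervals (hf _ _) (hf _ _)]

lemma mul_mul_qWeight_eq (hΔx : 0 < Δx) {k : ℕ} (hk : k ∈ Finset.Icc 1 (gridR1 δ Δx)) :
    Δx * (k * qWeight ω δ Δx k)
      = (∫ h in ((k : ℝ) - 1) * Δx..(k : ℝ) * Δx, ω h)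
        + if k = gridR δ Δx then ∫ h in (gridR δ Δx : ℝ) * Δx..δ, ω h else 0 := by
  have hk1 : (1 : ℝ) ≤ k := by exact_mod_cast (Finset.mem_Icc.1 hk).1
  have hR1 : (1 : ℝ) ≤ gridR1 δ Δx := by exact_mod_cast le_max_right _ _
  unfold qWeight
  split_ifs with hkr
  · have hR : gridR1 δ Δx = k := by unfold gridR1; have := (Finset.mem_Icc.1 hk).1; omega
    rw [hR]
    field_simp
  · field_simp
    ring

lemma mul_sum_mul_qWeight_eq_one (hΔx : 0 < Δx) (hω : AdmissibleKernel δ ω) :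
    Δx * ∑ k ∈ Finset.Icc 1 (gridR1 δ Δx), (k : ℝ) * qWeight ω δ Δx k = 1 := by
  have hint : ∀ a b : ℝ, IntervalIntegrable ω volume a b :=
    fun _ _ => hω.integrable.intervalIntegrable
  rw [Finset.mul_sum, Finset.sum_congr rfl fun k hk => mul_mul_qWeight_eq hΔx hk,
    Finset.sum_add_distrib, sum_Icc_integral_cells hint, Finset.sum_ite_eq']
  rcases Nat.eq_zero_or_pos (gridR δ Δx) with hr | hr
  · have hR : gridR1 δ Δx = 1 := by unfold gridR1; omega
    have hδ : δ < Δx := by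
      have := Nat.floor_eq_zero.1 hr
      rwa [div_lt_one hΔx] at this
    have htail : ∫ h in δ..Δx, ω h = 0 := by
      rw [intervalIntegral.integral_of_le hδ.le]
      exact setIntegral_eq_zero_of_forall_eq_zero fun h hh =>
        hω.supp h fun hmem => hh.1.not_ge hmem.2
    rw [if_neg (by simp [hr]), hR, Nat.cast_one, one_mul,
      ← intervalIntegral.integral_add_adjacent_intervals (hint 0 δ) (hint δ Δx), htail,
      hω.normalized]
    simp
  · have hR : gridR1 δ Δx = gridR δ Δx := by unfold gridR1; omega
    rw [if_pos (Finset.mem_Icc.2 ⟨hr, hR.ge⟩), hR,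
      intervalIntegral.integral_add_adjacent_intervals (hint _ _) (hint _ _), hω.normalized]

lemma sum_qWeight_le (hΔx : 0 < Δx) (hω : AdmissibleKernel δ ω) :
    ∑ k ∈ Finset.Icc 1 (gridR1 δ Δx), qWeight ω δ Δx k ≤ 1 / Δx := by
  rw [le_div_iff₀ hΔx, ← mul_sum_mul_qWeight_eq_one hΔx hω, mul_comm]
  gcongr with k hk
  have hk1 : (1 : ℝ) ≤ k := by exact_mod_cast (Finset.mem_Icc.1 hk).1
  exact le_mul_of_one_le_left (qWeight_nonneg hΔx hω (Finset.mem_Icc.1 hk).1) hk1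

end Weights

section PartialDerivatives

variable {g : ℝ → ℝ → ℝ} {B₁ B₂ : ℝ}

lemma hasDerivWithinAt_fst_of_contDiffOn
    (hg : ContDiffOn ℝ 1 (fun p : ℝ × ℝ => g p.1 p.2) (Icc B₁ B₂ ×ˢ Icc B₁ B₂))
    {a b : ℝ} (ha : a ∈ Icc B₁ B₂) (hb : b ∈ Icc B₁ B₂) :
    HasDerivWithinAt (fun a' => g a' b)
      (fderivWithin ℝ (fun p : ℝ × ℝ => g p.1 p.2) (Icc B₁ B₂ ×ˢ Icc B₁ B₂) (a, b) (1, 0))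
      (Icc B₁ B₂) a := by
  have hG := ((hg.differentiableOn one_ne_zero) (a, b) ⟨ha, hb⟩).hasFDerivWithinAt
  exact hG.comp_hasDerivWithinAt a
    ((hasDerivAt_id a).prodMk (hasDerivAt_const a b)).hasDerivWithinAt
    fun _ hx => mk_mem_prod hx hb

lemma bddAbove_abs_derivWithin_fst (hB : B₁ < B₂)
    (hg : ContDiffOn ℝ 1 (fun p : ℝ × ℝ => g p.1 p.2) (Icc B₁ B₂ ×ˢ Icc B₁ B₂)) :
    BddAbove ((fun p : ℝ × ℝ => |derivWithin (fun a => g a p.2) (Icc B₁ B₂) p.1|) ''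
      (Icc B₁ B₂ ×ˢ Icc B₁ B₂)) := by
  have hS : UniqueDiffOn ℝ (Icc B₁ B₂ ×ˢ Icc B₁ B₂) :=
    (uniqueDiffOn_Icc hB).prod (uniqueDiffOn_Icc hB)
  have hcont := (hg.continuousOn_fderivWithin hS le_rfl).clm_apply
    (continuousOn_const (c := ((1 : ℝ), (0 : ℝ))))
  rw [image_congr fun p hp =>
    congrArg abs ((hasDerivWithinAt_fst_of_contDiffOn hg hp.1 hp.2).derivWithin
      (uniqueDiffOn_Icc hB p.1 hp.1))]
  exact (isCompact_Icc.prod isCompact_Icc).bddAbove_image hcont.abs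

lemma supAbsDeriv1_nonneg : 0 ≤ supAbsDeriv1 g B₁ B₂ :=
  Real.sSup_nonneg <| by rintro _ ⟨_, _, rfl⟩; exact abs_nonneg _

lemma abs_sub_le_supAbsDeriv1_mul
    (hg : ContDiffOn ℝ 1 (fun p : ℝ × ℝ => g p.1 p.2) (Icc B₁ B₂ ×ˢ Icc B₁ B₂))
    {a a' b : ℝ} (ha : a ∈ Icc B₁ B₂) (ha' : a' ∈ Icc B₁ B₂) (hb : b ∈ Icc B₁ B₂) :
    |g a' b - g a b| ≤ supAbsDeriv1 g B₁ B₂ * |a' - a| := by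
  rcases lt_or_ge B₁ B₂ with hB | hB
  · unfold supAbsDeriv1
    simpa only [Real.norm_eq_abs] using
      (convex_Icc B₁ B₂).norm_image_sub_le_of_norm_derivWithin_le
        (fun x hx => (hasDerivWithinAt_fst_of_contDiffOn hg hx hb).differentiableWithinAt)
        (fun x hx => (Real.norm_eq_abs _).trans_le <|
          le_csSup (bddAbove_abs_derivWithin_fst hB hg) ⟨(x, b), ⟨hx, hb⟩, rfl⟩)
        ha ha'
  · have : a = a' := by linarith [ha.1, ha.2, ha'.1, ha'.2]
    simp [this]

lemma supAbsDeriv2_eq_supAbsDeriv1_swap :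
    supAbsDeriv2 g B₁ B₂ = supAbsDeriv1 (fun a b => g b a) B₁ B₂ := by
  unfold supAbsDeriv1 supAbsDeriv2
  conv_lhs => rw [← image_swap_prod, ← image_comp]
  rfl

lemma supAbsDeriv2_nonneg : 0 ≤ supAbsDeriv2 g B₁ B₂ :=
  supAbsDeriv2_eq_supAbsDeriv1_swap ▸ supAbsDeriv1_nonneg

lemma abs_sub_le_supAbsDeriv2_mul
    (hg : ContDiffOn ℝ 1 (fun p : ℝ × ℝ => g p.1 p.2) (Icc B₁ B₂ ×ˢ Icc B₁ B₂))
    {a b b' : ℝ} (ha : a ∈ Icc B₁ B₂) (hb : b ∈ Icc B₁ B₂) (hb' : b' ∈ Icc B₁ B₂) :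
    |g a b' - g a b| ≤ supAbsDeriv2 g B₁ B₂ * |b' - b| := by
  have hswap : ContDiffOn ℝ 1 (fun p : ℝ × ℝ => g p.2 p.1) (Icc B₁ B₂ ×ˢ Icc B₁ B₂) :=
    hg.comp (contDiff_snd.prodMk contDiff_fst).contDiffOn fun p hp => ⟨hp.2, hp.1⟩
  rw [supAbsDeriv2_eq_supAbsDeriv1_swap]
  exact abs_sub_le_supAbsDeriv1_mul (g := fun a b => g b a) hswap hb hb' ha

end PartialDerivatives

section Scheme

variable {g : ℝ → ℝ → ℝ} {s : Set ℝ} {L₁ L₂ : ℝ}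

-- Raising the outer arguments `b, c` can only lower the balance;
-- raising `a` costs at most `(L₁ + L₂) (a' - a)`.
lemma flux_balance_sub_le
    (hg1 : ∀ a a' b, a ∈ s → a' ∈ s → b ∈ s → a ≤ a' → g a b ≤ g a' b)
    (hg2 : ∀ a b b', a ∈ s → b ∈ s → b' ∈ s → b ≤ b' → g a b' ≤ g a b)
    (hL₁ : ∀ a a' b, a ∈ s → a' ∈ s → b ∈ s → |g a' b - g a b| ≤ L₁ * |a' - a|)
    (hL₂ : ∀ a b b', a ∈ s → b ∈ s → b' ∈ s → |g a b' - g a b| ≤ L₂ * |b' - b|)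
    {a a' b b' c c' : ℝ} (ha : a ∈ s) (ha' : a' ∈ s) (hb : b ∈ s) (hb' : b' ∈ s)
    (hc : c ∈ s) (hc' : c' ∈ s) (haa' : a ≤ a') (hbb' : b ≤ b') (hcc' : c ≤ c') :
    (g a' c' - g b' a') - (g a c - g b a) ≤ (L₁ + L₂) * (a' - a) := by
  have hc_mono := hg2 a' c c' ha' hc hc' hcc'
  have hb_mono := hg1 b b' a hb hb' ha hbb'
  have hlip₁ := (le_abs_self _).trans (hL₁ a a' c ha ha' hc)
  have hlip₂ := (le_abs_self _).trans (hL₂ b' a' a hb' ha' ha)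
  rw [abs_of_nonneg (sub_nonneg.2 haa')] at hlip₁
  rw [abs_sub_comm, abs_of_nonneg (sub_nonneg.2 haa')] at hlip₂
  linarith

lemma schemeStep_le_schemeStep {Δt : ℝ} {W : ℕ → ℝ} {R : ℕ} (hΔt : 0 ≤ Δt)
    (hW : ∀ k ∈ Finset.Icc 1 R, 0 ≤ W k)
    (hg1 : ∀ a a' b, a ∈ s → a' ∈ s → b ∈ s → a ≤ a' → g a b ≤ g a' b)
    (hg2 : ∀ a b b', a ∈ s → b ∈ s → b' ∈ s → b ≤ b' → g a b' ≤ g a b)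
    (hL₁ : ∀ a a' b, a ∈ s → a' ∈ s → b ∈ s → |g a' b - g a b| ≤ L₁ * |a' - a|)
    (hL₂ : ∀ a b b', a ∈ s → b ∈ s → b' ∈ s → |g a b' - g a b| ≤ L₂ * |b' - b|)
    (hCFL : Δt * (L₁ + L₂) * ∑ k ∈ Finset.Icc 1 R, W k ≤ 1)
    {v w : ℤ → ℝ} (hv : ∀ i, v i ∈ s) (hw : ∀ i, w i ∈ s) (hvw : ∀ i, v i ≤ w i) (j : ℤ) :
    schemeStep g Δt W R v j ≤ schemeStep g Δt W R w j := by
  set d := w j - v j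
  have hsum : ∑ k ∈ Finset.Icc 1 R,
      W k * (g (w j) (w (j + k)) - g (w (j - k)) (w j))
        - ∑ k ∈ Finset.Icc 1 R, W k * (g (v j) (v (j + k)) - g (v (j - k)) (v j))
      ≤ (∑ k ∈ Finset.Icc 1 R, W k) * ((L₁ + L₂) * d) := by
    rw [← Finset.sum_sub_distrib, Finset.sum_mul]
    refine Finset.sum_le_sum fun k hk => ?_
    rw [← mul_sub]
    exact mul_le_mul_of_nonneg_left (flux_balance_sub_le hg1 hg2 hL₁ hL₂ (hv _) (hw _)
      (hv _) (hw _) (hv _) (hw _) (hvw _) (hvw _) (hvw _)) (hW k hk)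
  have hd : 0 ≤ d := sub_nonneg.2 (hvw j)
  unfold schemeStep
  linarith [mul_le_mul_of_nonneg_left hsum hΔt, mul_le_mul_of_nonneg_left hCFL hd]

end Scheme

theorem schemeStep_monotone_general
    (δ Δx Δt B₁ B₂ : ℝ) (hΔx : 0 < Δx) (hΔt : 0 < Δt)
    (ω : ℝ → ℝ) (hω : AdmissibleKernel δ ω)
    (g : ℝ → ℝ → ℝ)
    (hg1 : ∀ a a' b, a ∈ Set.Icc B₁ B₂ → a' ∈ Set.Icc B₁ B₂ → b ∈ Set.Icc B₁ B₂ →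
      a ≤ a' → g a b ≤ g a' b)
    (hg2 : ∀ a b b', a ∈ Set.Icc B₁ B₂ → b ∈ Set.Icc B₁ B₂ → b' ∈ Set.Icc B₁ B₂ →
      b ≤ b' → g a b' ≤ g a b)
    (hgC1 : ContDiffOn ℝ 1 (fun p : ℝ × ℝ => g p.1 p.2) (Set.Icc B₁ B₂ ×ˢ Set.Icc B₁ B₂))
    (hCFL : Δt / Δx * (supAbsDeriv1 g B₁ B₂ + supAbsDeriv2 g B₁ B₂) ≤ 1)
    (v w : ℤ → ℝ)
    (hv : ∀ i, v i ∈ Set.Icc B₁ B₂) (hw : ∀ i, w i ∈ Set.Icc B₁ B₂)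
    (hvw : ∀ i, v i ≤ w i) :
    ∀ j, schemeStep g Δt (qWeight ω δ Δx) (gridR1 δ Δx) v j
      ≤ schemeStep g Δt (qWeight ω δ Δx) (gridR1 δ Δx) w j := by
  have hL : 0 ≤ Δt * (supAbsDeriv1 g B₁ B₂ + supAbsDeriv2 g B₁ B₂) :=
    mul_nonneg hΔt.le (add_nonneg supAbsDeriv1_nonneg supAbsDeriv2_nonneg)
  refine schemeStep_le_schemeStep hΔt.le
    (fun k hk => qWeight_nonneg hΔx hω (Finset.mem_Icc.1 hk).1) hg1 hg2
    (fun _ _ _ ha ha' hb => abs_sub_le_supAbsDeriv1_mul hgC1 ha ha' hb)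
    (fun _ _ _ ha hb hb' => abs_sub_le_supAbsDeriv2_mul hgC1 ha hb hb') ?_ hv hw hvw
  calc Δt * (supAbsDeriv1 g B₁ B₂ + supAbsDeriv2 g B₁ B₂)
        * ∑ k ∈ Finset.Icc 1 (gridR1 δ Δx), qWeight ω δ Δx k
      ≤ Δt * (supAbsDeriv1 g B₁ B₂ + supAbsDeriv2 g B₁ B₂) * (1 / Δx) :=
        mul_le_mul_of_nonneg_left (sum_qWeight_le hΔx hω) hL
    _ = Δt / Δx * (supAbsDeriv1 g B₁ B₂ + supAbsDeriv2 g B₁ B₂) := by ring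
    _ ≤ 1 := hCFL

/-- monotonicity of the scheme map `H` under the CFL condition. -/
theorem schemeStep_monotone
    (δ Δx Δt B₁ B₂ : ℝ) (hδ : 0 < δ) (hΔx : 0 < Δx) (hΔt : 0 < Δt) (hB : B₁ ≤ B₂)
    (ω : ℝ → ℝ) (hω : AdmissibleKernel δ ω)
    (g : ℝ → ℝ → ℝ)
    (hg1 : ∀ a a' b, a ∈ Set.Icc B₁ B₂ → a' ∈ Set.Icc B₁ B₂ → b ∈ Set.Icc B₁ B₂ →
      a ≤ a' → g a b ≤ g a' b)
    (hg2 : ∀ a b b', a ∈ Set.Icc B₁ B₂ → b ∈ Set.Icc B₁ B₂ → b' ∈ Set.Icc B₁ B₂ →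
      b ≤ b' → g a b' ≤ g a b)
    (hgC1 : ContDiffOn ℝ 1 (fun p : ℝ × ℝ => g p.1 p.2) (Set.Icc B₁ B₂ ×ˢ Set.Icc B₁ B₂))
    (hCFL : Δt / Δx * (supAbsDeriv1 g B₁ B₂ + supAbsDeriv2 g B₁ B₂) ≤ 1)
    (v w : ℤ → ℝ)
    (hv : ∀ i, v i ∈ Set.Icc B₁ B₂) (hw : ∀ i, w i ∈ Set.Icc B₁ B₂)
    (hvw : ∀ i, v i ≤ w i) :
    ∀ j, schemeStep g Δt (qWeight ω δ Δx) (gridR1 δ Δx) v j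
      ≤ schemeStep g Δt (qWeight ω δ Δx) (gridR1 δ Δx) w j :=
  schemeStep_monotone_general δ Δx Δt B₁ B₂ hΔx hΔt ω hω g hg1 hg2 hgC1 hCFL v w hv hw hvw
end
end

section
/- Define 𝕘(u_{j−r},…,u_{j+r−1}) = Σ_{k=1}^{r∨1} Σ_{l=1}^{k} g(u_{j−l}, u_{j−l+k}) W_k Δx. Then the nonlocal scheme u_j^{n+1} = u_j^n − Δt Σ_{k=1}^{r∨1} W_k (g(u_j^n, u_{j+k}^n) − g(u_{j−k}^n, u_j^n)) can be rewritten in the (2r)-point conservative form u_j^{n+1} = u_j^n − (Δt/Δx)(𝕘(u_{j−r+1}^n,…,u_{j+r}^n) − 𝕘(u_{j−r}^n,…,u_{j+r−1}^n)); moreover 𝕘 is Lipschitz continuous (since g is) and consistent with the local flux f: 𝕘(u,…,u) = f(u). -/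
open MeasureTheory Real Set Filter Topology

noncomputable section

/-
For each `k`, the differences `g(u_{j-l+1}, u_{j-l+1+k}) - g(u_{j-l}, u_{j-l+k})`, summed over
`l = 1, …, k`, telescope to `g(u_j, u_{j+k}) - g(u_{j-k}, u_j)`, which is the `k`-th term of the scheme; this gives
the conservative form for arbitrary weights. Every `𝕘` is a combination of `Σ_k k` values of `g`
with weights `W_k Δx`, so `𝕘` inherits the Lipschitz bound of `g`, and on constant data it equals
`(Δx Σ_k k W_k) f(u)`. The quadrature weights satisfy `Δx Σ_k k W_k = ∫₀^δ ω = 1`: the cells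
`[(k-1)Δx, kΔx]` tile `[0, rΔx]` and the correction term at `k = r` adds the remainder `[rΔx, δ]`
(when `r = 0`, the single cell `[0, Δx]` already contains `[0, δ]`).
-/

lemma sum_Icc_sub_telescope (G : ℤ → ℝ) (j : ℤ) (k : ℕ) :
    ∑ l ∈ Finset.Icc 1 k, (G (j + 1 - l) - G (j - l)) = G j - G (j - k) := by
  induction k with
  | zero => simp
  | succ k ih =>
    rw [Finset.sum_Icc_succ_top (by omega), ih]
    push_cast
    ring_nf

section bigFlux

variable (g : ℝ → ℝ → ℝ) (W : ℕ → ℝ) (Δx : ℝ) (R : ℕ)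

lemma bigFlux_add_one_sub (v : ℤ → ℝ) (j : ℤ) :
    bigFlux g W Δx R v (j + 1) - bigFlux g W Δx R v j
      = Δx * ∑ k ∈ Finset.Icc 1 R, W k * (g (v j) (v (j + k)) - g (v (j - k)) (v j)) := by
  simp only [bigFlux, ← Finset.sum_sub_distrib, Finset.mul_sum]
  refine Finset.sum_congr rfl fun k _ => ?_
  have htel := sum_Icc_sub_telescope (fun m => g (v m) (v (m + k))) j k
  simp only [sub_add_cancel] at htel
  rw [← mul_assoc, ← htel, Finset.mul_sum]
  exact Finset.sum_congr rfl fun l _ => by ring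

lemma schemeStep_eq_sub_bigFlux (Δt : ℝ) (hΔx : Δx ≠ 0) (v : ℤ → ℝ) (j : ℤ) :
    schemeStep g Δt W R v j
      = v j - Δt / Δx * (bigFlux g W Δx R v (j + 1) - bigFlux g W Δx R v j) := by
  rw [bigFlux_add_one_sub, schemeStep, ← mul_assoc, div_mul_cancel₀ Δt hΔx]

lemma bigFlux_const (a : ℝ) (j : ℤ) :
    bigFlux g W Δx R (fun _ => a) j = (∑ k ∈ Finset.Icc 1 R, (k : ℝ) * Δx * W k) * g a a := by
  simp only [bigFlux, Finset.sum_const, Nat.card_Icc, add_tsub_cancel_right, nsmul_eq_mul,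
    Finset.sum_mul]
  exact Finset.sum_congr rfl fun k _ => by ring

lemma abs_bigFlux_sub_le {C : ℝ} (hLip : ∀ a b c d, |g a b - g c d| ≤ C * (|a - c| + |b - d|))
    (v w : ℤ → ℝ) (j : ℤ) :
    |bigFlux g W Δx R v j - bigFlux g W Δx R w j|
      ≤ 2 * C * (∑ k ∈ Finset.Icc 1 R, (k : ℝ) * |W k * Δx|)
        * ∑ i ∈ Finset.Icc (j - R) (j + R - 1), |v i - w i| := by
  set S := ∑ i ∈ Finset.Icc (j - R) (j + R - 1), |v i - w i|
  have hC : 0 ≤ C := (abs_nonneg (g 1 0 - g 0 0)).trans (by simpa using hLip 1 0 0 0)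
  have hle_S : ∀ i ∈ Finset.Icc (j - R) (j + R - 1), |v i - w i| ≤ S :=
    fun i hi => Finset.single_le_sum (f := fun i => |v i - w i|) (fun _ _ => abs_nonneg _) hi
  have hterm : ∀ k ∈ Finset.Icc 1 R, ∀ l ∈ Finset.Icc 1 k,
      |g (v (j - l)) (v (j - l + k)) - g (w (j - l)) (w (j - l + k))| ≤ 2 * C * S := by
    intro k hk l hl
    simp only [Finset.mem_Icc] at hk hl
    calc _ ≤ C * (|v (j - l) - w (j - l)| + |v (j - l + k) - w (j - l + k)|) := hLip _ _ _ _
      _ ≤ C * (S + S) := by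
          gcongr <;> exact hle_S _ (Finset.mem_Icc.2 ⟨by omega, by omega⟩)
      _ = 2 * C * S := by ring
  calc |bigFlux g W Δx R v j - bigFlux g W Δx R w j|
      = |∑ k ∈ Finset.Icc 1 R, ∑ l ∈ Finset.Icc 1 k,
          (g (v (j - l)) (v (j - l + k)) - g (w (j - l)) (w (j - l + k))) * (W k * Δx)| := by
        simp only [bigFlux, ← Finset.sum_sub_distrib]
        congr 1
        exact Finset.sum_congr rfl fun k _ => Finset.sum_congr rfl fun l _ => by ring
    _ ≤ ∑ k ∈ Finset.Icc 1 R, ∑ l ∈ Finset.Icc 1 k,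
          |g (v (j - l)) (v (j - l + k)) - g (w (j - l)) (w (j - l + k))| * |W k * Δx| := by
        refine (Finset.abs_sum_le_sum_abs _ _).trans (Finset.sum_le_sum fun k _ => ?_)
        refine (Finset.abs_sum_le_sum_abs _ _).trans_eq (Finset.sum_congr rfl fun l _ => ?_)
        exact abs_mul _ _
    _ ≤ ∑ k ∈ Finset.Icc 1 R, ∑ l ∈ Finset.Icc 1 k, 2 * C * S * |W k * Δx| := by
        gcongr with k hk l hl
        exact hterm k hk l hl
    _ = 2 * C * (∑ k ∈ Finset.Icc 1 R, (k : ℝ) * |W k * Δx|) * S := by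
        simp only [Finset.sum_const, Nat.card_Icc, add_tsub_cancel_right, nsmul_eq_mul,
          Finset.mul_sum, Finset.sum_mul]
        exact Finset.sum_congr rfl fun k _ => by ring

end bigFlux

lemma AdmissibleKernel.integral_eq_one_of_le {δ b : ℝ} {ω : ℝ → ℝ} (hω : AdmissibleKernel δ ω)
    (hb : δ ≤ b) : ∫ h in (0 : ℝ)..b, ω h = 1 := by
  have hint : ∀ a b : ℝ, IntervalIntegrable ω volume a b :=
    fun _ _ => hω.integrable.intervalIntegrable
  have htail : ∫ h in δ..b, ω h = 0 := by
    rw [intervalIntegral.integral_of_le hb]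
    exact setIntegral_eq_zero_of_forall_eq_zero fun h hh =>
      hω.supp h fun hh' => (not_le.2 hh.1) hh'.2
  rw [← intervalIntegral.integral_add_adjacent_intervals (hint 0 δ) (hint δ b), htail,
    hω.normalized, add_zero]

lemma sum_integral_grid_cells {f : ℝ → ℝ} (hf : ∀ a b : ℝ, IntervalIntegrable f volume a b)
    (Δx : ℝ) (n : ℕ) :
    ∑ k ∈ Finset.Icc 1 n, ∫ h in ((k : ℝ) - 1) * Δx..(k : ℝ) * Δx, f h
      = ∫ h in (0 : ℝ)..n * Δx, f h := by
  induction n with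
  | zero => simp
  | succ n ih =>
    rw [Finset.sum_Icc_succ_top (by omega), ih, Nat.cast_succ, add_sub_cancel_right,
      intervalIntegral.integral_add_adjacent_intervals (hf _ _) (hf _ _)]

lemma lt_gridR_add_one_mul {δ Δx : ℝ} (hΔx : 0 < Δx) : δ < ((gridR δ Δx : ℝ) + 1) * Δx :=
  (div_lt_iff₀ hΔx).1 (Nat.lt_floor_add_one _)

lemma natCast_mul_mul_qWeight {ω : ℝ → ℝ} {δ Δx : ℝ} (hΔx : Δx ≠ 0) {k : ℕ} (hk : k ≠ 0) :
    (k : ℝ) * Δx * qWeight ω δ Δx k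
      = (∫ h in ((k : ℝ) - 1) * Δx..(k : ℝ) * Δx, ω h)
        + if k = gridR δ Δx then
            (k : ℝ) / gridR1 δ Δx * ∫ h in (gridR δ Δx : ℝ) * Δx..δ, ω h else 0 := by
  have hR : (gridR1 δ Δx : ℝ) ≠ 0 :=
    Nat.cast_ne_zero.2 (Nat.one_le_iff_ne_zero.1 (le_max_right _ _))
  unfold qWeight
  split_ifs
  · field_simp
  · field_simp
    ring

lemma sum_natCast_mul_mul_qWeight {ω : ℝ → ℝ} {δ Δx : ℝ} (hΔx : 0 < Δx)
    (hω : AdmissibleKernel δ ω) :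
    ∑ k ∈ Finset.Icc 1 (gridR1 δ Δx), (k : ℝ) * Δx * qWeight ω δ Δx k = 1 := by
  have hint : ∀ a b : ℝ, IntervalIntegrable ω volume a b :=
    fun _ _ => hω.integrable.intervalIntegrable
  rw [Finset.sum_congr rfl fun k hk => natCast_mul_mul_qWeight hΔx.ne'
      (Nat.one_le_iff_ne_zero.1 (Finset.mem_Icc.1 hk).1),
    Finset.sum_add_distrib, sum_integral_grid_cells hint, Finset.sum_ite_eq']
  rcases Nat.eq_zero_or_pos (gridR δ Δx) with hr | hr
  · have hR : gridR1 δ Δx = 1 := by simp [gridR1, hr]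
    have hδΔx : δ ≤ Δx := by simpa [hr] using (lt_gridR_add_one_mul (δ := δ) hΔx).le
    rw [if_neg (by simp [hr]), hR, Nat.cast_one, one_mul, add_zero]
    exact hω.integral_eq_one_of_le hδΔx
  · have hR : gridR1 δ Δx = gridR δ Δx := max_eq_left hr
    rw [hR, if_pos (Finset.mem_Icc.2 ⟨hr, le_rfl⟩), div_self (by positivity), one_mul,
      intervalIntegral.integral_add_adjacent_intervals (hint _ _) (hint _ _), hω.normalized]

theorem conservative_form_general
    (δ Δx Δt : ℝ) (hΔx : 0 < Δx)
    (ω : ℝ → ℝ) (hω : AdmissibleKernel δ ω)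
    (f : ℝ → ℝ) (g : ℝ → ℝ → ℝ) (C : ℝ)
    (hcons : ∀ x, g x x = f x)
    (hLip : ∀ a b c d, |g a b - g c d| ≤ C * (|a - c| + |b - d|))
    :
    (∀ v : ℤ → ℝ, ∀ j : ℤ,
      schemeStep g Δt (qWeight ω δ Δx) (gridR1 δ Δx) v j
        = v j - Δt / Δx * (bigFlux g (qWeight ω δ Δx) Δx (gridR1 δ Δx) v (j + 1)
            - bigFlux g (qWeight ω δ Δx) Δx (gridR1 δ Δx) v j)) ∧
    (∃ C' : ℝ, ∀ v w : ℤ → ℝ, ∀ j : ℤ,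
      |bigFlux g (qWeight ω δ Δx) Δx (gridR1 δ Δx) v j
          - bigFlux g (qWeight ω δ Δx) Δx (gridR1 δ Δx) w j|
        ≤ C' * ∑ i ∈ Finset.Icc (j - (gridR1 δ Δx : ℤ)) (j + (gridR1 δ Δx : ℤ) - 1),
            |v i - w i|) ∧
    (∀ a : ℝ, ∀ j : ℤ,
      bigFlux g (qWeight ω δ Δx) Δx (gridR1 δ Δx) (fun _ => a) j = f a) :=
  ⟨schemeStep_eq_sub_bigFlux g _ Δx _ Δt hΔx.ne',
    ⟨_, abs_bigFlux_sub_le g _ Δx _ hLip⟩,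
    fun a j => by
      rw [bigFlux_const, sum_natCast_mul_mul_qWeight hΔx hω, one_mul, hcons]⟩

/-- the nonlocal scheme can be rewritten in `(2r)`-point conservative
form with a Lipschitz continuous and consistent numerical flux `𝕘`. -/
theorem conservative_form
    (δ Δx Δt : ℝ) (hδ : 0 < δ) (hΔx : 0 < Δx) (hΔt : 0 < Δt)
    (ω : ℝ → ℝ) (hω : AdmissibleKernel δ ω)
    (f : ℝ → ℝ) (g : ℝ → ℝ → ℝ) (C : ℝ)
    (hcons : ∀ x, g x x = f x)
    (hLip : ∀ a b c d, |g a b - g c d| ≤ C * (|a - c| + |b - d|))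
    (hmono1 : ∀ a a' b, a ≤ a' → g a b ≤ g a' b)
    (hmono2 : ∀ a b b', b ≤ b' → g a b' ≤ g a b)
    :
    (∀ v : ℤ → ℝ, ∀ j : ℤ,
      schemeStep g Δt (qWeight ω δ Δx) (gridR1 δ Δx) v j
        = v j - Δt / Δx * (bigFlux g (qWeight ω δ Δx) Δx (gridR1 δ Δx) v (j + 1)
            - bigFlux g (qWeight ω δ Δx) Δx (gridR1 δ Δx) v j)) ∧
    (∃ C' : ℝ, ∀ v w : ℤ → ℝ, ∀ j : ℤ,
      |bigFlux g (qWeight ω δ Δx) Δx (gridR1 δ Δx) v j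
          - bigFlux g (qWeight ω δ Δx) Δx (gridR1 δ Δx) w j|
        ≤ C' * ∑ i ∈ Finset.Icc (j - (gridR1 δ Δx : ℤ)) (j + (gridR1 δ Δx : ℤ) - 1),
            |v i - w i|) ∧
    (∀ a : ℝ, ∀ j : ℤ,
      bigFlux g (qWeight ω δ Δx) Δx (gridR1 δ Δx) (fun _ => a) j = f a) :=
  conservative_form_general δ Δx Δt hΔx ω hω f g C hcons hLip
end
end
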